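/- arXiv:1306.6697 — 2 statements merged into one kernel-verified Lean document; each statement's English description precedes it below -/
import Mathlib

section
/- For any integer k and nonnegative integer n, B_n^{(k)}(x) = \sum_{l=0}^{n} \left\{ \sum_{m=0}^{n-l} \frac{(-1)^{n-m-l}}{(m+1)^k} \binom{n}{l} m! S_2(n-l,m) \right\} x^l, where S_2 denotes the Stirling numbers of the second kind. -/
open PowerSeries Finset Nat

/-- The formal power series `e^{-t}`. -/
noncomputable def expNeg : PowerSeries ℂ := PowerSeries.rescale (-1) (PowerSeries.exp ℂ)

/-- The generating function `Li_k(1-e^{-t})/(1-e^{-t}) = ∑_{m≥0} (1-e^{-t})^m/(m+1)^k`,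
given coefficientwise (the sum truncates since `(1-e^{-t})^m` has order `≥ m`). -/
noncomputable def polyBernoulliGF (k : ℤ) : PowerSeries ℂ :=
  PowerSeries.mk fun n => ∑ m ∈ Finset.range (n + 1),
    (((m : ℂ) + 1) ^ k)⁻¹ * PowerSeries.coeff n ((1 - expNeg) ^ m)

/-- The poly-Bernoulli polynomial `B_n^{(k)}(x)`, defined by
`Li_k(1-e^{-t})/(1-e^{-t}) · e^{xt} = ∑ B_n^{(k)}(x) tⁿ/n!`. -/
noncomputable def polyBernoulli (k : ℤ) (n : ℕ) (x : ℂ) : ℂ :=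
  (n ! : ℂ) * PowerSeries.coeff n
    (polyBernoulliGF k * PowerSeries.mk fun j => x ^ j / (j ! : ℂ))

/-- Stirling numbers of the second kind, via `(e^t-1)^m = m! ∑_{l} S₂(l,m) t^l/l!`. -/
noncomputable def stirling2 (l m : ℕ) : ℂ :=
  (l ! : ℂ) / (m ! : ℂ) * PowerSeries.coeff l ((PowerSeries.exp ℂ - 1) ^ m)

/-! Substituting `t ↦ -t` turns `(1 - e^{-t})^m` into `(-1)^m (e^t - 1)^m`, so the coefficients of
the generating function `∑_m (1 - e^{-t})^m / (m+1)^k` are signed Stirling numbers of the second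
kind. Multiplying by `e^{xt}` then convolves these binomially with the powers of `x`. -/

lemma coeff_one_sub_expNeg_pow (m j : ℕ) :
    coeff j ((1 - expNeg) ^ m) = (-1 : ℂ) ^ (m + j) * coeff j ((exp ℂ - 1) ^ m) := by
  have h_rescale : (1 : PowerSeries ℂ) - expNeg = rescale (-1) (1 - exp ℂ) := by
    rw [map_sub, map_one, expNeg]
  have h_neg : ((1 : PowerSeries ℂ) - exp ℂ) ^ m = C ((-1 : ℂ) ^ m) * (exp ℂ - 1) ^ m := by
    rw [← neg_sub (exp ℂ) 1, neg_pow, map_pow, map_neg, map_one]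
  rw [h_rescale, ← map_pow, coeff_rescale, h_neg, coeff_C_mul, pow_add]
  ring

lemma neg_one_pow_add_of_le {R : Type*} [Monoid R] [HasDistribNeg R] {m j : ℕ} (h : m ≤ j) :
    (-1 : R) ^ (m + j) = (-1) ^ (j - m) := by
  obtain ⟨d, rfl⟩ := Nat.exists_eq_add_of_le h
  rw [Nat.add_sub_cancel_left, show m + (m + d) = d + 2 * m by ring, pow_add, pow_mul,
    neg_one_sq, one_pow, mul_one]

/-- The poly-Bernoulli numbers `B_j^{(k)} = B_j^{(k)}(0)` in terms of Stirling numbers. -/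
lemma factorial_mul_coeff_polyBernoulliGF (k : ℤ) (j : ℕ) :
    (j ! : ℂ) * coeff j (polyBernoulliGF k) =
      ∑ m ∈ range (j + 1), (-1 : ℂ) ^ (j - m) / ((m : ℂ) + 1) ^ k * (m ! : ℂ) * stirling2 j m := by
  rw [polyBernoulliGF, coeff_mk, mul_sum]
  refine sum_congr rfl fun m hm => ?_
  rw [coeff_one_sub_expNeg_pow, neg_one_pow_add_of_le (Nat.lt_succ_iff.mp (mem_range.mp hm)),
    stirling2]
  have hm : (m ! : ℂ) ≠ 0 := mod_cast m.factorial_ne_zero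
  field_simp

lemma factorial_mul_coeff_mul_exp_mk {K : Type*} [Field K] [CharZero K] (f : PowerSeries K)
    (x : K) (n : ℕ) :
    (n ! : K) * coeff n (f * mk fun j => x ^ j / (j ! : K)) =
      ∑ l ∈ range (n + 1), (n.choose l : K) * ((n - l)! * coeff (n - l) f) * x ^ l := by
  rw [mul_comm f, coeff_mul, Nat.sum_antidiagonal_eq_sum_range_succ_mk, mul_sum]
  refine sum_congr rfl fun l hl => ?_
  have hfac : (n ! : K) = n.choose l * l ! * (n - l)! := mod_cast
    (Nat.choose_mul_factorial_mul_factorial (Nat.lt_succ_iff.mp (mem_range.mp hl))).symm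
  have hl : (l ! : K) ≠ 0 := mod_cast l.factorial_ne_zero
  rw [coeff_mk, hfac]
  field_simp

theorem polyBernoulli_eq_sum_stirling (k : ℤ) (n : ℕ) (x : ℂ) :
    polyBernoulli k n x =
      ∑ l ∈ Finset.range (n + 1),
        (∑ m ∈ Finset.range (n - l + 1),
          (-1 : ℂ) ^ (n - m - l) / ((m : ℂ) + 1) ^ k * (n.choose l : ℂ) * (m ! : ℂ) *
            stirling2 (n - l) m) * x ^ l := by
  rw [polyBernoulli, factorial_mul_coeff_mul_exp_mk]
  refine sum_congr rfl fun l _ => ?_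
  rw [factorial_mul_coeff_polyBernoulliGF, mul_sum, sum_mul, sum_mul]
  refine sum_congr rfl fun m _ => ?_
  rw [Nat.sub_right_comm]
  ring
end

section
/- For any integer k and nonnegative integer n, B_{n+1}^{(k)}(x) = x B_n^{(k)}(x) - \frac{1}{n+1} \sum_{l=0}^{n+1} \binom{n+1}{l} B_l \left\{ B_{n+1-l}^{(k)}(x) - B_{n+1-l}^{(k-1)}(x) \right\}, where B_l denotes the l-th ordinary Bernoulli number. -/
open PowerSeries Finset Nat

/-! Writing `F_k = ∑_m (1-e^{-t})^m/(m+1)^k`, the operator `(e^t-1) d/dt` multiplies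
`(1-e^{-t})^m` by `m`, so `(e^t-1) F_k' = F_{k-1} - F_k`; this holds for every partial sum and
passes to `F_k`, which the partial sums approximate `X`-adically. Multiplying by
`t/(e^t-1) = ∑ B_l t^l/l!` gives `t (F_k e^{xt})' = x t F_k e^{xt} - t/(e^t-1) (F_k - F_{k-1}) e^{xt}`,
and comparing the coefficients of `t^{n+1}/(n+1)!` gives the recurrence. -/

namespace PowerSeries

section CommSemiring

variable {R : Type*} [CommSemiring R]

theorem derivative_rescale (a : R) (f : R⟦X⟧) :
    d⁄dX R (rescale a f) = C a * rescale a (d⁄dX R f) := by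
  ext n
  simp only [coeff_derivative, coeff_rescale, coeff_C_mul]
  ring

theorem X_pow_dvd_derivative {f : R⟦X⟧} {N : ℕ} (h : X ^ (N + 1) ∣ f) :
    X ^ N ∣ d⁄dX R f := by
  rw [X_pow_dvd_iff] at h ⊢
  intro m hm
  rw [coeff_derivative, h (m + 1) (by omega), zero_mul]

theorem factorial_mul_coeff_mul (n : ℕ) (f g : R⟦X⟧) :
    (n ! : R) * coeff n (f * g) = ∑ l ∈ range (n + 1),
      (n.choose l : R) * ((l ! : R) * coeff l f) * (((n - l)! : R) * coeff (n - l) g) := by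
  rw [coeff_mul, Nat.sum_antidiagonal_eq_sum_range_succ_mk, mul_sum]
  refine sum_congr rfl fun l hl => ?_
  rw [← Nat.choose_mul_factorial_mul_factorial (by simpa [Nat.lt_succ_iff] using hl : l ≤ n)]
  push_cast
  ring

end CommSemiring

section CommRing

variable {R : Type*} [CommRing R]

theorem eq_of_forall_X_pow_dvd_sub {f g : R⟦X⟧} (h : ∀ N, X ^ N ∣ f - g) : f = g := by
  ext n
  rw [← sub_eq_zero, ← map_sub]
  exact X_pow_dvd_iff.mp (h (n + 1)) n n.lt_succ_self

theorem mul_derivative_pow_of_mul_derivative_eq {A u : R⟦X⟧} (h : A * d⁄dX R u = u) (m : ℕ) :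
    A * d⁄dX R (u ^ m) = m * u ^ m := by
  rw [derivative_pow]
  cases m with
  | zero => simp
  | succ m =>
    push_cast
    linear_combination ((m : R⟦X⟧) + 1) * u ^ m * h

end CommRing

section Field

variable {K : Type*} [Field K] [CharZero K]

theorem mk_pow_div_factorial (x : K) : (mk fun j => x ^ j / (j ! : K)) = rescale x (exp K) := by
  ext j
  simp [coeff_exp, div_eq_mul_inv]

theorem factorial_mul_coeff_bernoulliPowerSeries (n : ℕ) :
    (n ! : K) * coeff n (bernoulliPowerSeries K) = bernoulli n := by
  rw [bernoulliPowerSeries, coeff_mk, map_div₀, map_natCast, eq_ratCast,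
    mul_div_cancel₀ _ (by exact_mod_cast n.factorial_ne_zero)]

end Field

end PowerSeries

theorem exp_mul_expNeg : exp ℂ * expNeg = 1 := by
  simpa [expNeg] using exp_mul_exp_eq_exp_add (1 : ℂ) (-1)

theorem derivative_expNeg : d⁄dX ℂ expNeg = -expNeg := by
  simp [expNeg, derivative_rescale, derivative_exp]

theorem exp_sub_one_mul_derivative_one_sub_expNeg :
    (exp ℂ - 1) * d⁄dX ℂ (1 - expNeg) = 1 - expNeg := by
  rw [map_sub, derivative_one, derivative_expNeg, zero_sub, neg_neg, sub_mul, exp_mul_expNeg,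
    one_mul]

theorem X_pow_dvd_one_sub_expNeg_pow (m : ℕ) : X ^ m ∣ (1 - expNeg) ^ m := by
  refine pow_dvd_pow_of_dvd (X_dvd_iff.mpr ?_) m
  rw [map_sub, map_one, expNeg, ← coeff_zero_eq_constantCoeff_apply, coeff_rescale, coeff_exp]
  simp

noncomputable def polyBernoulliGFPartialSum (k : ℤ) (N : ℕ) : ℂ⟦X⟧ :=
  ∑ m ∈ range N, (((m : ℂ) + 1) ^ k)⁻¹ • (1 - expNeg) ^ m

theorem X_pow_dvd_polyBernoulliGF_sub_partialSum (k : ℤ) (N : ℕ) :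
    X ^ N ∣ polyBernoulliGF k - polyBernoulliGFPartialSum k N := by
  refine X_pow_dvd_iff.mpr fun n hn => ?_
  simp only [map_sub, sub_eq_zero, polyBernoulliGF, coeff_mk, polyBernoulliGFPartialSum, map_sum,
    coeff_smul, smul_eq_mul]
  refine sum_subset (range_subset_range.mpr hn) fun m _ hm => mul_eq_zero_of_right _ ?_
  have hnm : n + 1 ≤ m := by simpa using hm
  exact X_pow_dvd_iff.mp ((pow_dvd_pow X hnm).trans (X_pow_dvd_one_sub_expNeg_pow m)) n
    n.lt_succ_self

theorem exp_sub_one_mul_derivative_polyBernoulliGFPartialSum (k : ℤ) (N : ℕ) :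
    (exp ℂ - 1) * d⁄dX ℂ (polyBernoulliGFPartialSum k N) =
      polyBernoulliGFPartialSum (k - 1) N - polyBernoulliGFPartialSum k N := by
  simp only [polyBernoulliGFPartialSum, map_sum, mul_sum, ← sum_sub_distrib, ← sub_smul]
  refine sum_congr rfl fun m _ => ?_
  have hm : (m : ℂ) + 1 ≠ 0 := by exact_mod_cast m.succ_ne_zero
  rw [Derivation.map_smul, mul_smul_comm,
    mul_derivative_pow_of_mul_derivative_eq exp_sub_one_mul_derivative_one_sub_expNeg,
    ← nsmul_eq_mul, ← Nat.cast_smul_eq_nsmul ℂ, smul_smul, zpow_sub_one₀ hm, mul_inv, inv_inv]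
  congr 1
  ring

theorem exp_sub_one_mul_derivative_polyBernoulliGF (k : ℤ) :
    (exp ℂ - 1) * d⁄dX ℂ (polyBernoulliGF k) = polyBernoulliGF (k - 1) - polyBernoulliGF k := by
  refine eq_of_forall_X_pow_dvd_sub fun N => ?_
  have hdvd (j : ℤ) := X_pow_dvd_polyBernoulliGF_sub_partialSum j (N + 1)
  have hle : (X : ℂ⟦X⟧) ^ N ∣ X ^ (N + 1) := pow_dvd_pow X N.le_succ
  have hsplit : (exp ℂ - 1) * d⁄dX ℂ (polyBernoulliGF k) -
      (polyBernoulliGF (k - 1) - polyBernoulliGF k) =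
      (exp ℂ - 1) * d⁄dX ℂ (polyBernoulliGF k - polyBernoulliGFPartialSum k (N + 1)) -
        (polyBernoulliGF (k - 1) - polyBernoulliGFPartialSum (k - 1) (N + 1)) +
        (polyBernoulliGF k - polyBernoulliGFPartialSum k (N + 1)) := by
    rw [map_sub, mul_sub, exp_sub_one_mul_derivative_polyBernoulliGFPartialSum]
    ring
  rw [hsplit]
  exact dvd_add (dvd_sub (dvd_mul_of_dvd_right (X_pow_dvd_derivative (hdvd k)) _)
    (hle.trans (hdvd (k - 1)))) (hle.trans (hdvd k))

theorem X_mul_derivative_polyBernoulliGF_mul_rescale_exp (k : ℤ) (x : ℂ) :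
    X * d⁄dX ℂ (polyBernoulliGF k * rescale x (exp ℂ)) =
      C x * (X * (polyBernoulliGF k * rescale x (exp ℂ))) - bernoulliPowerSeries ℂ *
        (polyBernoulliGF k * rescale x (exp ℂ) - polyBernoulliGF (k - 1) * rescale x (exp ℂ)) := by
  rw [Derivation.leibniz, smul_eq_mul, smul_eq_mul, derivative_rescale, derivative_exp]
  linear_combination (bernoulliPowerSeries ℂ * rescale x (exp ℂ)) *
      exp_sub_one_mul_derivative_polyBernoulliGF k -
    (rescale x (exp ℂ) * d⁄dX ℂ (polyBernoulliGF k)) * bernoulliPowerSeries_mul_exp_sub_one ℂ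

theorem polyBernoulli_recurrence (k : ℤ) (n : ℕ) (x : ℂ) :
    polyBernoulli k (n + 1) x =
      x * polyBernoulli k n x - (1 / ((n : ℂ) + 1)) *
        ∑ l ∈ Finset.range (n + 2), ((n + 1).choose l : ℂ) * (bernoulli l : ℂ) *
          (polyBernoulli k (n + 1 - l) x - polyBernoulli (k - 1) (n + 1 - l) x) := by
  have hP (j : ℤ) (m : ℕ) :
      polyBernoulli j m x = m ! * coeff m (polyBernoulliGF j * rescale x (exp ℂ)) := by
    rw [polyBernoulli, mk_pow_div_factorial]
  have hrec := congrArg (fun f => ((n + 1)! : ℂ) * coeff (n + 1) f)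
    (X_mul_derivative_polyBernoulliGF_mul_rescale_exp k x)
  simp only [coeff_succ_X_mul, coeff_derivative, map_sub, coeff_C_mul, mul_sub,
    factorial_mul_coeff_mul, factorial_mul_coeff_bernoulliPowerSeries, ← hP] at hrec
  rw [hP k n, hP k (n + 1)]
  have hn : (n : ℂ) + 1 ≠ 0 := by exact_mod_cast n.succ_ne_zero
  rw [Nat.factorial_succ] at hrec ⊢
  push_cast at hrec ⊢
  simp only [mul_sub, sum_sub_distrib] at hrec ⊢
  field_simp
  linear_combination hrec
end
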